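/- arXiv:0910.4048 — 9 statements merged into one kernel-verified Lean document; each statement's English description precedes it below -/
import Mathlib

section
/- For each real u > 0, the limit as m tends to infinity of the sum over k from 1 to m of binom(m,k) * (-1)^(k+1) / (k*u + 1) equals 1. -/
/-!
Expanding the sum at `k = 0` turns it into `1 - ∑_{k=0}^m C(m,k) (-1)^k / (k u + 1)`. With
`s = 1/u`, the partial-fraction identity `∑_{k=0}^m C(m,k) (-1)^k / (s + k) = m! / ∏_{j=0}^m (s + j)`
makes the latter sum `s · Γₘ(s) / m^s`, where `Γₘ(s) → Γ(s)` is Euler's sequence for the Gamma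
function; since `m^s → ∞`, it tends to `0`.
-/

open Filter Finset Real
open scoped Nat Topology

theorem sum_range_choose_mul_neg_one_pow_div_add {K : Type*} [Field K] (n : ℕ) (x : K)
    (hx : ∀ j ≤ n, x + j ≠ 0) :
    ∑ k ∈ range (n + 1), (n.choose k : K) * ((-1) ^ k / (x + k)) =
      n ! / ∏ j ∈ range (n + 1), (x + j) := by
  induction n generalizing x with
  | zero => simp
  | succ n ih =>
    have hx' : ∀ j ≤ n, x + 1 + j ≠ 0 := fun j hj => by
      simpa [add_assoc, add_comm (1 : K)] using hx (j + 1) (by omega)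
    have hP : ∏ j ∈ range (n + 1), (x + j) ≠ 0 :=
      prod_ne_zero_iff.2 fun j hj => hx j (by grind)
    have hP' : ∏ j ∈ range (n + 1), (x + 1 + j) ≠ 0 :=
      prod_ne_zero_iff.2 fun j hj => hx' j (by grind)
    have hlast : ∏ j ∈ range (n + 2), (x + j) =
        (∏ j ∈ range (n + 1), (x + j)) * (x + (n + 1 : ℕ)) :=
      prod_range_succ _ _
    have hfirst : ∏ j ∈ range (n + 2), (x + j) = x * ∏ j ∈ range (n + 1), (x + 1 + j) := by
      rw [prod_range_succ', mul_comm]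
      push_cast
      simp [add_assoc, add_comm (1 : K)]
    -- Pascal's rule: the sum at rank `n + 1` and `x` is the difference of those at rank `n`
    -- and `x`, `x + 1`.
    have pascal := sum_choose_succ_mul (fun k _ => ((-1) ^ k / (x + k) : K)) n
    have shift : ∀ k : ℕ, ((-1) ^ (k + 1) / (x + (k + 1 : ℕ)) : K) = -((-1) ^ k / (x + 1 + k)) := by
      intro k
      push_cast
      ring
    simp only [shift, mul_neg, sum_neg_distrib] at pascal
    rw [pascal, ← sub_eq_add_neg, ih x fun j hj => hx j (by omega), ih (x + 1) hx',
      div_sub_div _ _ hP hP', div_eq_div_iff (mul_ne_zero hP hP')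
        (hlast ▸ mul_ne_zero hP (hx (n + 1) le_rfl)), Nat.factorial_succ]
    push_cast at hlast ⊢
    linear_combination ((n ! : K) * ∏ j ∈ range (n + 1), (x + 1 + j)) * hlast -
      ((n ! : K) * ∏ j ∈ range (n + 1), (x + j)) * hfirst

theorem tendsto_factorial_div_prod_add_nat {s : ℝ} (hs : 0 < s) :
    Tendsto (fun n : ℕ => n ! / ∏ j ∈ range (n + 1), (s + j)) atTop (𝓝 0) := by
  have hpow : Tendsto (fun n : ℕ => ((n : ℝ) ^ s)⁻¹) atTop (𝓝 0) :=
    tendsto_inv_atTop_zero.comp ((tendsto_rpow_atTop hs).comp tendsto_natCast_atTop_atTop)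
  have hlim := (GammaSeq_tendsto_Gamma s).mul hpow
  rw [mul_zero] at hlim
  refine hlim.congr' (eventually_ne_atTop 0 |>.mono fun n hn => ?_)
  have : (n : ℝ) ^ s ≠ 0 := (rpow_pos_of_pos (Nat.cast_pos.2 (Nat.pos_of_ne_zero hn)) s).ne'
  simp only [GammaSeq]
  field_simp

theorem sum_range_choose_mul_neg_one_pow_div_mul_add_one {u : ℝ} (hu : 0 < u) (m : ℕ) :
    ∑ k ∈ range (m + 1), (m.choose k : ℝ) * ((-1) ^ k / (k * u + 1)) =
      u⁻¹ * (m ! / ∏ j ∈ range (m + 1), (u⁻¹ + j)) := by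
  rw [← sum_range_choose_mul_neg_one_pow_div_add m u⁻¹ fun j _ => by positivity, mul_sum]
  refine sum_congr rfl fun k _ => ?_
  field_simp
  ring

theorem stmt0 (u : ℝ) (hu : 0 < u) :
    Tendsto (fun m : ℕ => ∑ k ∈ Icc 1 m, (m.choose k : ℝ) * (-1) ^ (k + 1) / (k * u + 1))
      atTop (nhds 1) := by
  have hsum : ∀ m : ℕ, ∑ k ∈ Icc 1 m, (m.choose k : ℝ) * (-1) ^ (k + 1) / (k * u + 1) =
      1 - u⁻¹ * (m ! / ∏ j ∈ range (m + 1), (u⁻¹ + j)) := by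
    intro m
    rw [← sum_range_choose_mul_neg_one_pow_div_mul_add_one hu, sum_range_eq_add_Ico _ (by omega : 0 < m + 1),
      Ico_add_one_right_eq_Icc]
    have hneg : ∑ k ∈ Icc 1 m, (m.choose k : ℝ) * (-1) ^ (k + 1) / (k * u + 1) =
        -∑ k ∈ Icc 1 m, (m.choose k : ℝ) * ((-1) ^ k / (k * u + 1)) := by
      rw [← sum_neg_distrib]
      exact sum_congr rfl fun k _ => by ring
    simp [hneg]
  simpa [hsum] using tendsto_const_nhds.sub
    ((tendsto_factorial_div_prod_add_nat (inv_pos.2 hu)).const_mul u⁻¹)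
end

section
/- For each z ≥ 1 and each positive integer m, one has 0 < m!/(z*(z+1)*...*(z+m)) ≤ 1/(1 + 1/2 + 1/3 + ... + 1/m), and consequently for fixed z > 0 the quantity m!/(z*(z+1)*...*(z+m)) tends to 0 as m → ∞. -/
/-!
Since `(z + 1) ⋯ (z + m) = m! ∏_{k ≤ m} (1 + z / k)`, the quantity equals
`1 / (z ∏ (1 + z / k))`.
Expanding the product of terms `1 + z / k ≥ 1` keeps at least `1 + z H_m`, where `H_m` is the
`m`-th harmonic number, so the quantity is at most `1 / (z (1 + z H_m))`. For `z ≥ 1` this is at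
most `1 / H_m`, and for every `z > 0` it tends to `0` because the harmonic series diverges.
-/

open Filter Finset

theorem Finset.one_add_sum_le_prod_one_add {ι R : Type*} [CommSemiring R] [PartialOrder R]
    [IsOrderedRing R] (s : Finset ι) {f : ι → R} (hf : ∀ i ∈ s, 0 ≤ f i) :
    1 + ∑ i ∈ s, f i ≤ ∏ i ∈ s, (1 + f i) := by
  classical
  induction s using Finset.induction_on with
  | empty => simp
  | insert a s ha ih =>
    rw [sum_insert ha, prod_insert ha]
    have hfa := hf a (mem_insert_self a s)
    have hsum : 0 ≤ ∑ i ∈ s, f i := sum_nonneg fun i hi => hf i (mem_insert_of_mem hi)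
    calc 1 + (f a + ∑ i ∈ s, f i) ≤ 1 + (f a + ∑ i ∈ s, f i) + f a * ∑ i ∈ s, f i :=
          le_add_of_nonneg_right (mul_nonneg hfa hsum)
      _ = (1 + f a) * (1 + ∑ i ∈ s, f i) := by ring
      _ ≤ (1 + f a) * ∏ i ∈ s, (1 + f i) :=
          mul_le_mul_of_nonneg_left (ih fun i hi => hf i (mem_insert_of_mem hi))
            (add_nonneg zero_le_one hfa)

lemma sum_Icc_one_div_eq_sum_range (m : ℕ) :
    ∑ i ∈ Icc 1 m, (1 : ℝ) / i = ∑ i ∈ range m, (1 : ℝ) / (i + 1) := by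
  induction m with
  | zero => simp
  | succ m ih => rw [sum_Icc_succ_top (by omega), ih, sum_range_succ]; push_cast; rfl

lemma prod_range_succ_add_eq (z : ℝ) (m : ℕ) :
    ∏ i ∈ range (m + 1), (z + i) = z * m.factorial * ∏ i ∈ range m, (1 + z / (i + 1)) := by
  rw [prod_range_succ', mul_comm, ← prod_range_add_one_eq_factorial, Nat.cast_prod,
    mul_assoc, ← prod_mul_distrib]
  simp only [CharP.cast_eq_zero, add_zero]
  congr 1
  refine prod_congr rfl fun i _ => ?_
  push_cast
  field_simp
  ring

lemma factorial_div_prod_le {z : ℝ} (hz : 0 < z) (m : ℕ) :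
    (m.factorial : ℝ) / ∏ i ∈ range (m + 1), (z + i) ≤
      1 / (z * (1 + z * ∑ i ∈ range m, (1 : ℝ) / (i + 1))) := by
  have hprod := one_add_sum_le_prod_one_add (range m) (f := fun i : ℕ => z / (i + 1))
    fun i _ => by positivity
  simp only [div_eq_mul_one_div z, ← mul_sum] at hprod
  rw [prod_range_succ_add_eq, mul_right_comm, div_mul_cancel_right₀ (by positivity), ← one_div]
  gcongr
  simpa only [div_eq_mul_one_div z] using hprod

lemma factorial_div_prod_pos {z : ℝ} (hz : 0 < z) (m : ℕ) :
    0 < (m.factorial : ℝ) / ∏ i ∈ range (m + 1), (z + i) :=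
  div_pos (mod_cast m.factorial_pos) (prod_pos fun i _ => by positivity)

theorem stmt2 :
    (∀ z : ℝ, 1 ≤ z → ∀ m : ℕ, 0 < m →
      0 < (m.factorial : ℝ) / ∏ i ∈ range (m + 1), (z + i) ∧
      (m.factorial : ℝ) / ∏ i ∈ range (m + 1), (z + i) ≤ 1 / ∑ i ∈ Icc 1 m, (1 : ℝ) / i) ∧
    (∀ z : ℝ, 0 < z →
      Tendsto (fun m : ℕ => (m.factorial : ℝ) / ∏ i ∈ range (m + 1), (z + i))
        atTop (nhds 0)) := by
  refine ⟨fun z hz m hm => ⟨factorial_div_prod_pos (by linarith) m, ?_⟩, fun z hz => ?_⟩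
  · rw [sum_Icc_one_div_eq_sum_range]
    have hH : 0 < ∑ i ∈ range m, (1 : ℝ) / (i + 1) :=
      sum_pos (fun i _ => by positivity) (nonempty_range_iff.mpr hm.ne')
    refine (factorial_div_prod_le (by linarith) m).trans (one_div_le_one_div_of_le hH ?_)
    nlinarith [mul_nonneg (sub_nonneg.2 hz) hH.le]
  · have hdiv : Tendsto (fun m : ℕ => z * (1 + z * ∑ i ∈ range m, (1 : ℝ) / (i + 1)))
        atTop atTop :=
      (tendsto_atTop_add_const_left _ 1
        (Real.tendsto_sum_range_one_div_nat_succ_atTop.const_mul_atTop hz)).const_mul_atTop hz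
    refine squeeze_zero (fun m => (factorial_div_prod_pos hz m).le) (factorial_div_prod_le hz) ?_
    simpa only [one_div, Pi.inv_def] using hdiv.inv_tendsto_atTop
end

section
/- For each real u > 0, the limit as m tends to infinity of the sum over k from 1 to m of binom(m,k) * (-1)^(k+1) / k * ln(k*u + 1) equals u. -/
/-!
Write `F_m(x) = ∑_{k=1}^m (-1)^(k+1) C(m,k)/k · ln(kx + 1)`, so that `F_m(0) = 0`. Its derivative
is an alternating binomial sum of `1/(kt + 1)`, i.e. an `m`-th forward difference of `x ↦ 1/x`,
and evaluating that difference gives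
`1 - F_m'(t) = m! t^m / ∏_{j=0}^m (1 + jt) = ∏_{j=1}^m jt/(1 + jt)`.
On `[0, u]` this lies between `0` and its value at `u`, so `|F_m(u) - u|` is at most `u` times
`∏_{j=1}^m (1 - 1/(1 + ju))`, which tends to `0` because `∑ 1/(1 + ju)` diverges like the harmonic
series.
-/

open Filter Finset Real Topology
open scoped Nat

section

variable {K : Type*} [Field K]

theorem factorial_mul_pow_div_prod_one_add (t : K) (m : ℕ) :
    m ! * t ^ m / ∏ j ∈ range (m + 1), (1 + j * t)
      = ∏ j ∈ range m, ((j + 1) * t / (1 + (j + 1) * t)) := by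
  rw [prod_range_succ', prod_div_distrib, ← prod_range_add_one_eq_factorial, prod_mul_distrib,
    prod_const, card_range]
  push_cast
  simp

variable [LinearOrder K] [IsStrictOrderedRing K]

theorem fwdDiff_iter_inv {t : K} (ht : 0 ≤ t) (m : ℕ) {s : K} (hs : 0 < s) :
    (fwdDiff t)^[m] (·⁻¹) s = (-1) ^ m * m ! * t ^ m / ∏ j ∈ range (m + 1), (s + j * t) := by
  induction m generalizing s with
  | zero => simp
  | succ m ih =>
    have hst : 0 < s + t := by positivity
    rw [Function.iterate_succ_apply', fwdDiff, ih hst, ih hs, Nat.factorial_succ]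
    have hshift : ∏ j ∈ range (m + 2), (s + j * t)
        = (∏ j ∈ range (m + 1), (s + t + j * t)) * s := by
      rw [prod_range_succ']
      simp only [Nat.cast_add, Nat.cast_one, add_mul, one_mul, Nat.cast_zero, zero_mul, add_zero]
      congr 1
      exact prod_congr rfl fun j _ => by ring
    have hlast : ∏ j ∈ range (m + 2), (s + j * t)
        = (∏ j ∈ range (m + 1), (s + j * t)) * (s + (m + 1) * t) := by
      rw [prod_range_succ]
      push_cast
      rfl
    have hP : 0 < ∏ j ∈ range (m + 1), (s + j * t) := prod_pos fun j _ => by positivity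
    have hQ : 0 < ∏ j ∈ range (m + 1), (s + t + j * t) := prod_pos fun j _ => by positivity
    rw [hshift] at hlast ⊢
    generalize ∏ j ∈ range (m + 1), (s + j * t) = P at *
    generalize ∏ j ∈ range (m + 1), (s + t + j * t) = Q at *
    field_simp
    push_cast
    linear_combination -((-1) ^ m * m ! * t ^ m) * hlast

theorem sum_range_neg_one_pow_mul_choose_div {t : K} (ht : 0 ≤ t) (m : ℕ) {s : K} (hs : 0 < s) :
    ∑ k ∈ range (m + 1), (-1) ^ k * m.choose k / (s + k * t)
      = m ! * t ^ m / ∏ j ∈ range (m + 1), (s + j * t) := by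
  have hsign : ∀ k ∈ range (m + 1), (-1 : K) ^ m * (-1) ^ (m - k) = (-1) ^ k := fun k hk => by
    rw [← Nat.sub_add_cancel (mem_range_succ_iff.mp hk), pow_add, Nat.add_sub_cancel,
      mul_right_comm, ← mul_pow, neg_one_mul, neg_neg, one_pow, one_mul]
  calc ∑ k ∈ range (m + 1), (-1) ^ k * m.choose k / (s + k * t)
      = (-1) ^ m * (fwdDiff t)^[m] (·⁻¹) s := by
        rw [fwdDiff_iter_eq_sum_shift, mul_sum]
        refine sum_congr rfl fun k hk => ?_
        rw [zsmul_eq_mul, nsmul_eq_mul, ← hsign k hk]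
        push_cast
        ring
    _ = m ! * t ^ m / ∏ j ∈ range (m + 1), (s + j * t) := by
        rw [fwdDiff_iter_inv ht m hs, mul_div_assoc', ← mul_assoc, ← mul_assoc, ← mul_pow,
          neg_one_mul, neg_neg, one_pow, one_mul]

theorem one_sub_sum_Icc_choose_div_eq_prod {t : K} (ht : 0 ≤ t) (m : ℕ) :
    1 - ∑ k ∈ Icc 1 m, (m.choose k : K) * (-1) ^ (k + 1) / (k * t + 1)
      = ∏ j ∈ range m, ((j + 1) * t / (1 + (j + 1) * t)) := by
  rw [← factorial_mul_pow_div_prod_one_add, ← sum_range_neg_one_pow_mul_choose_div ht m one_pos,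
    range_eq_Ico, sum_eq_sum_Ico_succ_bot (a := 0) (b := m + 1) (by omega), zero_add,
    Ico_add_one_right_eq_Icc, sub_eq_add_neg, ← sum_neg_distrib]
  simp only [pow_zero, Nat.choose_zero_right, Nat.cast_one, Nat.cast_zero, zero_mul, add_zero,
    div_one, one_mul]
  congr 1
  refine sum_congr rfl fun k _ => ?_
  rw [add_comm (k * t), pow_succ]
  ring

end

theorem prod_one_sub_le_exp_neg_sum {ι : Type*} (s : Finset ι) {f : ι → ℝ}
    (hf : ∀ i ∈ s, f i ≤ 1) : ∏ i ∈ s, (1 - f i) ≤ exp (-∑ i ∈ s, f i) := by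
  rw [← sum_neg_distrib, exp_sum]
  exact prod_le_prod (fun i hi => sub_nonneg.mpr (hf i hi))
    fun i _ => by linarith [add_one_le_exp (-f i)]

theorem tendsto_prod_range_div_one_add {u : ℝ} (hu : 0 < u) :
    Tendsto (fun m : ℕ => ∏ j ∈ range m, ((j + 1) * u / (1 + (j + 1) * u))) atTop (𝓝 0) := by
  have hfactor : ∀ j : ℕ, (j + 1) * u / (1 + (j + 1) * u) = 1 - 1 / (1 + (j + 1) * u) :=
    fun j => by field_simp; ring
  have hharmonic : ∀ j : ℕ, (1 + u)⁻¹ * (1 / ((j : ℝ) + 1)) ≤ 1 / (1 + (j + 1) * u) := fun j =>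
    calc (1 + u)⁻¹ * (1 / ((j : ℝ) + 1)) = 1 / ((1 + u) * (j + 1)) := by field_simp
      _ ≤ 1 / (1 + (j + 1) * u) := one_div_le_one_div_of_le (by positivity) (by nlinarith)
  have hsum : Tendsto (fun m : ℕ => ∑ j ∈ range m, 1 / (1 + ((j : ℝ) + 1) * u)) atTop atTop :=
    tendsto_atTop_mono (fun m => by simpa only [mul_sum] using sum_le_sum fun j _ => hharmonic j)
      (tendsto_sum_range_one_div_nat_succ_atTop.const_mul_atTop (by positivity))
  refine squeeze_zero (fun m => prod_nonneg fun j _ => by positivity) (fun m => ?_)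
    (tendsto_exp_atBot.comp (tendsto_neg_atTop_atBot.comp hsum))
  simp only [hfactor, Function.comp]
  exact prod_one_sub_le_exp_neg_sum _ fun j _ => div_le_one_of_le₀ (by nlinarith) (by positivity)

theorem hasDerivAt_sum_choose_mul_log (m : ℕ) {t : ℝ} (ht : 0 ≤ t) :
    HasDerivAt (fun x => ∑ k ∈ Icc 1 m, (m.choose k : ℝ) * (-1) ^ (k + 1) / k * log (k * x + 1))
      (∑ k ∈ Icc 1 m, (m.choose k : ℝ) * (-1) ^ (k + 1) / (k * t + 1)) t := by
  refine HasDerivAt.fun_sum fun k hk => ?_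
  have hk : (k : ℝ) ≠ 0 := by have := (mem_Icc.mp hk).1; positivity
  have hlog := (((hasDerivAt_id' t).const_mul (k : ℝ)).add_const 1).log (by positivity)
  refine (hlog.const_mul ((m.choose k : ℝ) * (-1) ^ (k + 1) / k)).congr_deriv ?_
  field_simp

theorem abs_sum_choose_mul_log_sub_le {u : ℝ} (hu : 0 ≤ u) (m : ℕ) :
    |∑ k ∈ Icc 1 m, (m.choose k : ℝ) * (-1) ^ (k + 1) / k * log (k * u + 1) - u|
      ≤ (∏ j ∈ range m, ((j + 1) * u / (1 + (j + 1) * u))) * u := by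
  have hderiv : ∀ t ∈ Set.Icc 0 u, HasDerivWithinAt
      (fun x => x - ∑ k ∈ Icc 1 m, (m.choose k : ℝ) * (-1) ^ (k + 1) / k * log (k * x + 1))
      (∏ j ∈ range m, ((j + 1) * t / (1 + (j + 1) * t))) (Set.Icc 0 u) t := fun t ht => by
    rw [← one_sub_sum_Icc_choose_div_eq_prod ht.1]
    exact ((hasDerivAt_id t).sub (hasDerivAt_sum_choose_mul_log m ht.1)).hasDerivWithinAt
  have hbound : ∀ t ∈ Set.Icc 0 u,
      ‖∏ j ∈ range m, ((j + 1) * t / (1 + (j + 1) * t))‖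
        ≤ ∏ j ∈ range m, ((j + 1) * u / (1 + (j + 1) * u)) := fun t ⟨ht, htu⟩ => by
    rw [norm_of_nonneg (prod_nonneg fun j _ => by positivity)]
    refine prod_le_prod (fun j _ => by positivity) fun j _ => ?_
    have : (j + 1) * t ≤ (j + 1) * u := by gcongr
    rw [div_le_div_iff₀ (by positivity) (by positivity)]
    nlinarith
  have := (convex_Icc 0 u).norm_image_sub_le_of_norm_hasDerivWithin_le hderiv hbound
    (Set.left_mem_Icc.mpr hu) (Set.right_mem_Icc.mpr hu)
  rw [abs_sub_comm]
  simpa [abs_of_nonneg hu] using this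

theorem stmt3 (u : ℝ) (hu : 0 < u) :
    Tendsto (fun m : ℕ =>
        ∑ k ∈ Icc 1 m, (m.choose k : ℝ) * (-1) ^ (k + 1) / k * Real.log (k * u + 1))
      atTop (nhds u) := by
  refine tendsto_iff_norm_sub_tendsto_zero.mpr <| squeeze_zero (fun _ => norm_nonneg _)
    (fun m => abs_sum_choose_mul_log_sub_le hu.le m) ?_
  simpa using (tendsto_prod_range_div_one_add hu).mul_const u
end

section
/- For each real u > 0, the limit as m tends to infinity of the sum over k from 1 to m of binom(m,k) * (-1)^(k+1) * ln(k + u) equals ln u. -/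
/-!
With `f k = log (k + u)`, the sum equals `log u - (-1) ^ m Δ^m f 0`, so it suffices that the
iterated forward differences of `f` at `0` tend to `0`. Now `Δ f k = ∫_u^{u+1} ds / (s + k)`, and
the partial fraction expansion `Δ^n (k ↦ 1 / (s + k)) 0 = (-1)^n n! / (s (s+1) ⋯ (s+n))` gives
`|Δ^{n+1} f 0| ≤ n! / (u (u+1) ⋯ (u+n)) = GammaSeq u n / n ^ u`, which tends to `Γ(u) · 0 = 0`
by Euler's limit formula.
-/

open Filter Finset Real
open scoped Nat Topology fwdDiff
open MeasureTheory

theorem sum_Icc_choose_mul_neg_one_pow_eq_sub_fwdDiff_iter {R : Type*} [CommRing R] (f : ℕ → R)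
    (m : ℕ) :
    ∑ k ∈ Icc 1 m, (m.choose k : R) * (-1) ^ (k + 1) * f k = f 0 - (-1) ^ m * Δ_[1] ^[m] f 0 := by
  rw [fwdDiff_iter_eq_sum_shift, mul_sum, Nat.range_succ_eq_Icc_zero,
    Icc_eq_cons_Ioc m.zero_le, sum_cons, ← Icc_add_one_left_eq_Ioc, Nat.zero_add 1]
  have hsign : ∀ k ∈ Icc 1 m, (-1 : R) ^ m * (((-1 : ℤ) ^ (m - k) * m.choose k) • f (0 + k • 1))
      = -((m.choose k : R) * (-1) ^ (k + 1) * f k) := fun k hk => by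
    obtain ⟨j, rfl⟩ := Nat.exists_eq_add_of_le (mem_Icc.1 hk).2
    have hj : ((-1 : R) ^ j) ^ 2 = 1 := by rw [← pow_mul, pow_mul', neg_one_sq, one_pow]
    simp only [add_tsub_cancel_left, zsmul_eq_mul, smul_eq_mul, mul_one, zero_add]
    push_cast
    linear_combination (-1) ^ k * ((k + j).choose k : R) * f k * hj
  rw [sum_congr rfl hsign, sum_neg_distrib]
  simp [← mul_assoc, ← mul_pow]

theorem fwdDiff_iter_inv_add {K : Type*} [Field K] {v : K} (hv : ∀ k : ℕ, v + k ≠ 0)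
    (n x : ℕ) :
    Δ_[1] ^[n] (fun k : ℕ => (v + k)⁻¹) x = (-1) ^ n * n ! / ∏ i ∈ range (n + 1), (v + x + i) := by
  have hne : ∀ x i : ℕ, v + x + i ≠ 0 := fun x i => by
    simpa [add_assoc] using hv (x + i)
  induction n generalizing x with
  | zero => simp
  | succ n ih =>
    set P := ∏ i ∈ range n, (v + x + ↑(i + 1))
    have hB : ∏ i ∈ range (n + 1), (v + x + i) = P * (v + x) := by
      rw [prod_range_succ', Nat.cast_zero, add_zero]
    have hA : ∏ i ∈ range (n + 1), (v + ↑(x + 1) + i) = P * (v + x + ↑(n + 1)) := by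
      rw [prod_range_succ]
      push_cast
      congr 1
      · exact prod_congr rfl fun i _ => by push_cast; ring
      · ring
    have hP : P ≠ 0 := prod_ne_zero_iff.2 fun i _ => hne x (i + 1)
    rw [Function.iterate_succ_apply', fwdDiff, ih, ih, hA, prod_range_succ _ (n + 1), hB]
    have hx₀ := hv x
    have hxn := hne x (n + 1)
    field_simp
    push_cast [Nat.factorial_succ]
    ring

theorem fwdDiff_iter_integral {M E α : Type*} [AddCommMonoid M] [NormedAddCommGroup E]
    [NormedSpace ℝ E] [MeasurableSpace α] {μ : Measure α} (F : M → α → E) (h : M) (n : ℕ)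
    (y : M) (hF : ∀ k ≤ n, Integrable (F (y + k • h)) μ) :
    Δ_[h] ^[n] (fun x => ∫ a, F x a ∂μ) y = ∫ a, Δ_[h] ^[n] (fun x => F x a) y ∂μ := by
  simp only [fwdDiff_iter_eq_sum_shift, ← Int.cast_smul_eq_zsmul ℝ]
  rw [integral_finsetSum]
  · simp only [integral_smul]
  · exact fun k hk => (hF k (Nat.lt_succ_iff.1 (mem_range.1 hk))).smul _

theorem fwdDiff_log_natCast_add {u : ℝ} (hu : 0 < u) :
    Δ_[1] (fun k : ℕ => log (k + u)) = fun k : ℕ => ∫ s in Set.Ioc u (u + 1), (s + k)⁻¹ := by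
  ext k
  rw [← intervalIntegral.integral_of_le (by linarith),
    intervalIntegral.integral_comp_add_right (fun s => s⁻¹), integral_inv_of_pos (by positivity)
      (by positivity), log_div (by positivity) (by positivity), fwdDiff]
  push_cast
  ring_nf

theorem norm_fwdDiff_iter_succ_log_natCast_add_le {u : ℝ} (hu : 0 < u) (n : ℕ) :
    ‖Δ_[1] ^[n + 1] (fun k : ℕ => log (k + u)) 0‖ ≤ n ! / ∏ j ∈ range (n + 1), (u + j) := by
  have hpos : ∀ s : ℝ, 0 < s → 0 < ∏ j ∈ range (n + 1), (s + j) := fun s hs =>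
    prod_pos fun j _ => by positivity
  rw [Function.iterate_succ_apply, fwdDiff_log_natCast_add hu, fwdDiff_iter_integral]
  · have hvol : volume.real (Set.Ioc u (u + 1)) = 1 := by simp [volume_real_Ioc]
    refine (norm_setIntegral_le_of_norm_le_const measure_Ioc_lt_top fun s hs => ?_).trans_eq
      (by rw [hvol, mul_one])
    rw [fwdDiff_iter_inv_add fun k => (add_pos_of_pos_of_nonneg (hu.trans hs.1) k.cast_nonneg).ne']
    simp only [CharP.cast_eq_zero, add_zero, norm_div, norm_mul, norm_pow, norm_neg, norm_one,
      one_pow, one_mul, RCLike.norm_natCast]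
    rw [Real.norm_of_nonneg (hpos s (hu.trans hs.1)).le]
    gcongr
    exact hs.1.le
  · intro k _
    refine (ContinuousOn.integrableOn_Icc ?_).mono_set Set.Ioc_subset_Icc_self
    exact continuousOn_id.add continuousOn_const |>.inv₀ fun s (hs : s ∈ Set.Icc u (u + 1)) =>
      (add_pos_of_pos_of_nonneg (hu.trans_le hs.1) (Nat.cast_nonneg _)).ne'

theorem tendsto_factorial_div_prod_add {u : ℝ} (hu : 0 < u) :
    Tendsto (fun n : ℕ => n ! / ∏ j ∈ range (n + 1), (u + j)) atTop (𝓝 0) := by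
  have hpow : Tendsto (fun n : ℕ => (n : ℝ) ^ (-u)) atTop (𝓝 0) :=
    (tendsto_rpow_neg_atTop hu).comp tendsto_natCast_atTop_atTop
  have hlim := (GammaSeq_tendsto_Gamma u).mul hpow
  rw [mul_zero] at hlim
  refine hlim.congr' ?_
  filter_upwards [eventually_ge_atTop 1] with n hn
  have hn₀ : (0 : ℝ) < n := by exact_mod_cast hn
  rw [GammaSeq, rpow_neg hn₀.le, mul_comm, ← mul_div_assoc, ← mul_assoc,
    inv_mul_cancel₀ (by positivity), one_mul]

theorem stmt5 (u : ℝ) (hu : 0 < u) :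
    Tendsto (fun m : ℕ =>
        ∑ k ∈ Icc 1 m, (m.choose k : ℝ) * (-1) ^ (k + 1) * Real.log (k + u))
      atTop (nhds (Real.log u)) := by
  have hΔ : Tendsto (fun m => Δ_[1] ^[m] (fun k : ℕ => log (k + u)) 0) atTop (𝓝 0) := by
    rw [← tendsto_add_atTop_iff_nat 1]
    exact squeeze_zero_norm (norm_fwdDiff_iter_succ_log_natCast_add_le hu)
      (tendsto_factorial_div_prod_add hu)
  have hsigned : Tendsto (fun m => (-1) ^ m * Δ_[1] ^[m] (fun k : ℕ => log (k + u)) 0)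
      atTop (𝓝 0) :=
    squeeze_zero_norm (fun m => by simp) (tendsto_zero_iff_norm_tendsto_zero.1 hΔ)
  simp_rw [sum_Icc_choose_mul_neg_one_pow_eq_sub_fwdDiff_iter fun k => log (k + u)]
  simpa using tendsto_const_nhds.sub hsigned
end

section
/- The limit as m tends to infinity of the sum over k from 1 to m of binom(m,k) * (-1)^k / k * ln(k!) equals the Euler–Mascheroni constant γ. -/
open Filter Finset Real MeasureTheory

/-!
Fubini applied to `∫₀¹ ∫₀ʲ t ^ s ds dt` gives `log (j + 1) = ∫₀¹ (1 - t ^ j) / -log t dt`, so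
`log k! = ∑_{j<k} log (j + 1)` turns the sum into `∫₀¹ ψₘ`, where binomial identities give `ψₘ`
in closed form (`eulerIntegrandTrunc`). As `m → ∞`, `ψₘ` increases to
`1 / (1 - t) + 1 / log t`, and by monotone convergence the integrals converge to the integral of
this limit. The same argument applied to `(1 - t ^ n) (1 / (1 - t) + 1 / log t)`, whose integral
is `H_n - log (n + 1) → γ`, shows that this integral is `γ`.
-/

theorem sum_range_succ_eq_add_sum_Icc_one {M : Type*} [AddCommMonoid M] (f : ℕ → M) (m : ℕ) :
    ∑ k ∈ range (m + 1), f k = f 0 + ∑ k ∈ Icc 1 m, f k := by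
  rw [Nat.range_succ_eq_Icc_zero, ← insert_Icc_add_one_left_eq_Icc m.zero_le,
    sum_insert (by simp), zero_add]

theorem sum_Icc_neg_one_pow_mul_choose {R : Type*} [CommRing R] {m : ℕ} (hm : m ≠ 0) :
    ∑ k ∈ Icc 1 m, (-1) ^ k * (m.choose k : R) = -1 := by
  have h := congrArg (Int.cast : ℤ → R) (Int.alternating_sum_range_choose_of_ne hm)
  rw [sum_range_succ_eq_add_sum_Icc_one] at h
  push_cast [Nat.choose_zero_right] at h
  linear_combination h

theorem sum_range_choose_mul_neg_one_pow_mul_one_sub_pow {R : Type*} [CommRing R] (n : ℕ)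
    (x : R) :
    ∑ k ∈ range (n + 1), (n.choose k : R) * (-1) ^ k * (1 - x ^ k) = 0 ^ n - (1 - x) ^ n := by
  have h (y : R) : (1 - y) ^ n = ∑ k ∈ range (n + 1), (n.choose k : R) * (-1) ^ k * y ^ k := by
    rw [sub_eq_neg_add, add_pow]
    exact sum_congr rfl fun k _ => by rw [neg_pow]; ring
  rw [← sub_self (1 : R), h 1, h x, ← sum_sub_distrib]
  exact sum_congr rfl fun k _ => by ring

theorem choose_div_add_one {K : Type*} [Field K] [CharZero K] (n k : ℕ) :
    (n.choose k : K) / (k + 1) = (n + 1).choose (k + 1) / (n + 1) := by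
  rw [div_eq_div_iff (Nat.cast_add_one_ne_zero k) (Nat.cast_add_one_ne_zero n), mul_comm]
  exact_mod_cast Nat.add_one_mul_choose_eq n k

/-- Telescoping: by Pascal's rule and the binomial theorem, the left side grows by
`(1 - x) ^ (n + 1) / (n + 1)` from `n` to `n + 1`. -/
theorem sum_Icc_choose_mul_neg_one_pow_mul_one_sub_pow_div {K : Type*} [Field K] [CharZero K]
    (n : ℕ) (x : K) :
    ∑ k ∈ Icc 1 n, (n.choose k : K) * (-1) ^ (k + 1) * (1 - x ^ k) / k =
      ∑ i ∈ range n, (1 - x) ^ (i + 1) / (i + 1) := by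
  set D : ℕ → K := fun p =>
    ∑ k ∈ range (p + 1), (p.choose k : K) * (-1) ^ (k + 1) * (1 - x ^ k) / k
  have hstep (m : ℕ) : D (m + 1) - D m = (1 - x) ^ (m + 1) / (m + 1) := by
    have hD : D m =
        ∑ k ∈ range (m + 2), (m.choose k : K) * (-1) ^ (k + 1) * (1 - x ^ k) / k := by
      simp [D, sum_range_succ _ (m + 1)]
    rw [hD, ← sum_sub_distrib]
    calc _ = -(∑ k ∈ range (m + 2), ((m + 1).choose k : K) * (-1) ^ k * (1 - x ^ k)) /
          (m + 1) := by
          rw [neg_div, sum_div, ← sum_neg_distrib]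
          refine sum_congr rfl fun k _ => ?_
          rcases k with _ | j
          · simp
          have h := choose_div_add_one (K := K) m j
          have hc : ((m + 1).choose (j + 1) : K) = m.choose j + m.choose (j + 1) := by
            exact_mod_cast Nat.choose_succ_succ' m j
          push_cast
          linear_combination (-(-1) ^ (j + 1) * (1 - x ^ (j + 1)) / (j + 1)) * hc -
            (-1) ^ (j + 1) * (1 - x ^ (j + 1)) * h
      _ = _ := by
          rw [sum_range_choose_mul_neg_one_pow_mul_one_sub_pow]
          simp
  have h := sum_range_sub D n
  simp only [hstep] at h
  rw [h, show D 0 = 0 by simp [D], sub_zero]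
  simp only [D, sum_range_succ_eq_add_sum_Icc_one, pow_zero, sub_self, mul_zero, zero_div,
    zero_add]

theorem integral_Ioo_zero_one_rpow {s : ℝ} (hs : -1 < s) :
    ∫ t in Set.Ioo (0 : ℝ) 1, t ^ s = 1 / (s + 1) := by
  rw [← integral_Ioc_eq_integral_Ioo, ← intervalIntegral.integral_of_le zero_le_one,
    integral_rpow (Or.inl hs), zero_rpow (by linarith), one_rpow, sub_zero]

theorem integral_Ioo_const_rpow {t : ℝ} (ht₀ : 0 < t) (ht₁ : t ≠ 1) {a : ℝ} (ha : 0 ≤ a) :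
    ∫ s in Set.Ioo 0 a, t ^ s = (1 - t ^ a) / -log t := by
  have hlog : log t ≠ 0 := log_ne_zero_of_pos_of_ne_one ht₀ ht₁
  have hderiv (s : ℝ) : HasDerivAt (fun s => t ^ s / log t) (t ^ s) s := by
    simpa [mul_div_cancel_right₀ _ hlog] using
      (hasStrictDerivAt_const_rpow ht₀ s).hasDerivAt.div_const (log t)
  rw [← integral_Ioc_eq_integral_Ioo, ← intervalIntegral.integral_of_le ha,
    intervalIntegral.integral_eq_sub_of_hasDerivAt (fun s _ => hderiv s)
      ((continuous_const.rpow continuous_id fun _ => Or.inl ht₀.ne').intervalIntegrable _ _),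
    rpow_zero]
  field_simp
  ring

theorem integrable_rpow_Ioo_prod_Ioo (a : ℝ) :
    Integrable (fun p : ℝ × ℝ => p.1 ^ p.2)
      ((volume.restrict (Set.Ioo (0 : ℝ) 1)).prod (volume.restrict (Set.Ioo 0 a))) := by
  refine (integrable_const (1 : ℝ)).mono'
    (measurable_fst.pow measurable_snd).aestronglyMeasurable ?_
  rw [Measure.prod_restrict]
  filter_upwards [ae_restrict_mem (measurableSet_Ioo.prod measurableSet_Ioo)] with p ⟨ht, hs⟩
  rw [norm_of_nonneg (rpow_nonneg ht.1.le _)]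
  exact rpow_le_one ht.1.le ht.2.le hs.1.le

theorem one_sub_rpow_div_neg_log_ae_eq {a : ℝ} (ha : 0 ≤ a) :
    (fun t => (1 - t ^ a) / -log t) =ᵐ[volume.restrict (Set.Ioo (0 : ℝ) 1)]
      fun t => ∫ s in Set.Ioo 0 a, t ^ s := by
  filter_upwards [ae_restrict_mem measurableSet_Ioo] with t ht
  exact (integral_Ioo_const_rpow ht.1 ht.2.ne ha).symm

theorem integrableOn_one_sub_rpow_div_neg_log {a : ℝ} (ha : 0 ≤ a) :
    IntegrableOn (fun t => (1 - t ^ a) / -log t) (Set.Ioo 0 1) :=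
  (integrable_rpow_Ioo_prod_Ioo a).integral_prod_left.congr
    (one_sub_rpow_div_neg_log_ae_eq ha).symm

theorem integral_one_sub_rpow_div_neg_log {a : ℝ} (ha : 0 ≤ a) :
    ∫ t in Set.Ioo 0 1, (1 - t ^ a) / -log t = log (a + 1) := by
  calc _ = ∫ t in Set.Ioo 0 1, ∫ s in Set.Ioo 0 a, t ^ s :=
        integral_congr_ae (one_sub_rpow_div_neg_log_ae_eq ha)
    _ = ∫ s in Set.Ioo 0 a, ∫ t in Set.Ioo 0 1, t ^ s :=
        integral_integral_swap (integrable_rpow_Ioo_prod_Ioo a)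
    _ = ∫ s in Set.Ioo 0 a, 1 / (s + 1) := setIntegral_congr_fun measurableSet_Ioo fun s hs =>
          integral_Ioo_zero_one_rpow (by linarith [hs.1])
    _ = log (a + 1) := by
      rw [← integral_Ioc_eq_integral_Ioo, ← intervalIntegral.integral_of_le ha,
        intervalIntegral.integral_comp_add_right (fun s => 1 / s), zero_add,
        integral_one_div_of_pos zero_lt_one (by linarith), div_one]

theorem integrableOn_one_sub_pow_div_neg_log (n : ℕ) :
    IntegrableOn (fun t => (1 - t ^ n) / -log t) (Set.Ioo 0 1) := by
  simpa using integrableOn_one_sub_rpow_div_neg_log n.cast_nonneg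

theorem integral_one_sub_pow_div_neg_log (n : ℕ) :
    ∫ t in Set.Ioo 0 1, (1 - t ^ n) / -log t = log (n + 1) := by
  simpa using integral_one_sub_rpow_div_neg_log n.cast_nonneg

theorem one_sub_pow_div_one_sub {K : Type*} [Field K] {t : K} (ht : t ≠ 1) (n : ℕ) :
    (1 - t ^ n) / (1 - t) = ∑ j ∈ range n, t ^ j := by
  rw [geom_sum_eq ht, ← neg_div_neg_eq, neg_sub, neg_sub]

theorem integrableOn_one_sub_pow_div_one_sub (n : ℕ) :
    IntegrableOn (fun t : ℝ => (1 - t ^ n) / (1 - t)) (Set.Ioo 0 1) := by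
  refine IntegrableOn.congr_fun ?_ (fun t ht => (one_sub_pow_div_one_sub ht.2.ne n).symm)
    measurableSet_Ioo
  exact (continuous_finsetSum _ fun j _ => continuous_pow j).integrableOn_Icc.mono_set
    Set.Ioo_subset_Icc_self

theorem integral_one_sub_pow_div_one_sub (n : ℕ) :
    ∫ t in Set.Ioo (0 : ℝ) 1, (1 - t ^ n) / (1 - t) = harmonic n := by
  rw [setIntegral_congr_fun measurableSet_Ioo fun t ht => one_sub_pow_div_one_sub ht.2.ne n,
    integral_finsetSum]
  · simp only [harmonic, Rat.cast_sum, Rat.cast_inv, Nat.cast_add_one]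
    refine sum_congr rfl fun j _ => ?_
    simpa using integral_Ioo_zero_one_rpow (s := j) (by linarith [j.cast_nonneg (α := ℝ)])
  · exact fun j _ => (continuous_pow j).integrableOn_Icc.mono_set Set.Ioo_subset_Icc_self

theorem log_factorial_eq_integral (k : ℕ) :
    log k.factorial = ∫ t in Set.Ioo 0 1, ∑ j ∈ range k, (1 - t ^ j) / -log t := by
  rw [integral_finsetSum _ fun j _ => integrableOn_one_sub_pow_div_neg_log j,
    ← prod_range_add_one_eq_factorial, Nat.cast_prod, log_prod fun j _ => by positivity]
  exact sum_congr rfl fun j _ => by rw [integral_one_sub_pow_div_neg_log]; push_cast; rfl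

noncomputable def eulerIntegrand (t : ℝ) : ℝ := 1 / (1 - t) + 1 / log t

theorem eulerIntegrand_eq (t : ℝ) : eulerIntegrand t = 1 / (1 - t) - 1 / -log t := by
  rw [eulerIntegrand, one_div_neg_eq_neg_one_div, sub_neg_eq_add]

theorem eulerIntegrand_nonneg {t : ℝ} (ht : t ∈ Set.Ioo 0 1) : 0 ≤ eulerIntegrand t := by
  have h : 1 / -log t ≤ 1 / (1 - t) :=
    one_div_le_one_div_of_le (by linarith [ht.2]) (by linarith [log_le_sub_one_of_pos ht.1])
  rw [eulerIntegrand_eq]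
  linarith

theorem eulerIntegrand_le_one {t : ℝ} (ht : t ∈ Set.Ioo 0 1) : eulerIntegrand t ≤ 1 := by
  have hlog : 0 < -log t := neg_pos.mpr (log_neg ht.1 ht.2)
  have h1t : 0 < 1 - t := sub_pos.mpr ht.2
  have h : t / (1 - t) ≤ 1 / -log t := by
    rw [div_le_div_iff₀ h1t hlog]
    have := mul_le_mul_of_nonneg_left (one_sub_inv_le_log_of_pos ht.1) ht.1.le
    rw [mul_sub, mul_inv_cancel₀ ht.1.ne'] at this
    linarith
  rw [eulerIntegrand_eq]
  calc _ ≤ 1 / (1 - t) - t / (1 - t) := by linarith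
    _ = 1 := by rw [div_sub_div_same, div_self h1t.ne']

theorem integrableOn_eulerIntegrand : IntegrableOn eulerIntegrand (Set.Ioo 0 1) := by
  refine (integrable_const (1 : ℝ)).mono' (by unfold eulerIntegrand; fun_prop) ?_
  filter_upwards [ae_restrict_mem measurableSet_Ioo] with t ht
  rw [norm_of_nonneg (eulerIntegrand_nonneg ht)]
  exact eulerIntegrand_le_one ht

/-- Monotone convergence for `(1 - t ^ n) * eulerIntegrand t`, whose integral is
`harmonic n - log (n + 1)`. -/
theorem integral_eulerIntegrand :
    ∫ t in Set.Ioo 0 1, eulerIntegrand t = eulerMascheroniConstant := by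
  set f : ℕ → ℝ → ℝ := fun n t => (1 - t ^ n) * eulerIntegrand t
  have hf (n : ℕ) : Set.EqOn (f n) (fun t => (1 - t ^ n) / (1 - t) - (1 - t ^ n) / -log t)
      (Set.Ioo 0 1) := fun t _ => by
    simp only [f, eulerIntegrand_eq]
    ring
  have hf_int (n : ℕ) : IntegrableOn (f n) (Set.Ioo 0 1) :=
    ((integrableOn_one_sub_pow_div_one_sub n).sub
      (integrableOn_one_sub_pow_div_neg_log n)).congr_fun (hf n).symm measurableSet_Ioo
  have hf_integral (n : ℕ) : ∫ t in Set.Ioo 0 1, f n t = harmonic n - log (n + 1) := by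
    rw [setIntegral_congr_fun measurableSet_Ioo (hf n), integral_sub
      (integrableOn_one_sub_pow_div_one_sub n) (integrableOn_one_sub_pow_div_neg_log n),
      integral_one_sub_pow_div_one_sub, integral_one_sub_pow_div_neg_log]
  refine tendsto_nhds_unique ?_
    (tendsto_harmonic_sub_log_add_one.congr fun n => (hf_integral n).symm)
  refine integral_tendsto_of_tendsto_of_monotone hf_int integrableOn_eulerIntegrand ?_ ?_
  · filter_upwards [ae_restrict_mem measurableSet_Ioo] with t ht
    refine monotone_nat_of_le_succ fun n =>
      mul_le_mul_of_nonneg_right ?_ (eulerIntegrand_nonneg ht)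
    gcongr 1 - ?_
    exact pow_le_pow_of_le_one ht.1.le ht.2.le n.le_succ
  · filter_upwards [ae_restrict_mem measurableSet_Ioo] with t ht
    simpa using ((tendsto_pow_atTop_nhds_zero_of_lt_one ht.1.le ht.2).const_sub 1).mul_const
      (eulerIntegrand t)

/-- `eulerIntegrand t = (-log t / (1 - t) - 1) / -log t`; here the first `-log t` is replaced by
the `m`-th partial sum of its series `∑ (1 - t) ^ i / i`. -/
noncomputable def eulerIntegrandTrunc (m : ℕ) (t : ℝ) : ℝ :=
  ((∑ i ∈ range m, (1 - t) ^ (i + 1) / (i + 1)) / (1 - t) - 1) / -log t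

theorem sum_choose_mul_sum_one_sub_pow_div_neg_log {m : ℕ} (hm : m ≠ 0) {t : ℝ} (ht : t ≠ 1) :
    ∑ k ∈ Icc 1 m, (m.choose k : ℝ) * (-1) ^ k / k * ∑ j ∈ range k, (1 - t ^ j) / -log t =
      eulerIntegrandTrunc m t := by
  have h1t : 1 - t ≠ 0 := sub_ne_zero.mpr ht.symm
  have hterm : ∀ k ∈ Icc 1 m,
      (m.choose k : ℝ) * (-1) ^ k / k * ∑ j ∈ range k, (1 - t ^ j) / -log t =
        ((-1) ^ k * m.choose k +
          (m.choose k : ℝ) * (-1) ^ (k + 1) * (1 - t ^ k) / k / (1 - t)) / -log t := by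
    intro k hk
    have hk : (k : ℝ) ≠ 0 := Nat.cast_ne_zero.mpr (Nat.one_le_iff_ne_zero.mp (mem_Icc.mp hk).1)
    rw [← sum_div, sum_sub_distrib, sum_const, card_range, nsmul_one,
      ← one_sub_pow_div_one_sub ht]
    field_simp
    ring
  rw [sum_congr rfl hterm, ← sum_div, sum_add_distrib, ← sum_div,
    sum_Icc_neg_one_pow_mul_choose hm, sum_Icc_choose_mul_neg_one_pow_mul_one_sub_pow_div,
    eulerIntegrandTrunc]
  ring

theorem integrableOn_eulerIntegrandTrunc {m : ℕ} (hm : m ≠ 0) :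
    IntegrableOn (eulerIntegrandTrunc m) (Set.Ioo 0 1) := by
  refine IntegrableOn.congr_fun ?_
    (fun _ ht => sum_choose_mul_sum_one_sub_pow_div_neg_log hm ht.2.ne) measurableSet_Ioo
  exact integrable_finsetSum _ fun k _ => (integrable_finsetSum _ fun j _ =>
    integrableOn_one_sub_pow_div_neg_log j).const_mul _

theorem integral_eulerIntegrandTrunc {m : ℕ} (hm : m ≠ 0) :
    ∫ t in Set.Ioo 0 1, eulerIntegrandTrunc m t =
      ∑ k ∈ Icc 1 m, (m.choose k : ℝ) * (-1) ^ k / k * log k.factorial := by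
  rw [← setIntegral_congr_fun measurableSet_Ioo
    fun _ ht => sum_choose_mul_sum_one_sub_pow_div_neg_log hm ht.2.ne, integral_finsetSum]
  · simp only [integral_const_mul, ← log_factorial_eq_integral]
  · exact fun k _ => (integrable_finsetSum _ fun j _ =>
      integrableOn_one_sub_pow_div_neg_log j).const_mul _

theorem monotone_eulerIntegrandTrunc {t : ℝ} (ht : t ∈ Set.Ioo 0 1) :
    Monotone fun m => eulerIntegrandTrunc m t := by
  have h1t : 0 < 1 - t := sub_pos.mpr ht.2
  have hlog : 0 < -log t := neg_pos.mpr (log_neg ht.1 ht.2)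
  refine monotone_nat_of_le_succ fun m => ?_
  unfold eulerIntegrandTrunc
  gcongr
  exact m.le_succ

theorem tendsto_eulerIntegrandTrunc {t : ℝ} (ht : t ∈ Set.Ioo 0 1) :
    Tendsto (fun m => eulerIntegrandTrunc m t) atTop (nhds (eulerIntegrand t)) := by
  have hseries := (hasSum_pow_div_log_of_abs_lt_one
    (abs_lt.mpr ⟨by linarith [ht.2], by linarith [ht.1]⟩ : |1 - t| < 1)).tendsto_sum_nat
  rw [sub_sub_cancel] at hseries
  have h1t : 1 - t ≠ 0 := sub_ne_zero.mpr ht.2.ne'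
  have hlog : log t ≠ 0 := (log_neg ht.1 ht.2).ne
  have hlim : (-log t / (1 - t) - 1) / -log t = eulerIntegrand t := by
    rw [eulerIntegrand_eq]
    field_simp
    ring
  rw [← hlim]
  exact ((hseries.div_const (1 - t)).sub_const 1).div_const (-log t)

theorem stmt7 :
    Tendsto (fun m : ℕ =>
        ∑ k ∈ Icc 1 m, (m.choose k : ℝ) * (-1) ^ k / k * Real.log (Nat.factorial k))
      atTop (nhds Real.eulerMascheroniConstant) := by
  have hMCT : Tendsto (fun m => ∫ t in Set.Ioo 0 1, eulerIntegrandTrunc (m + 1) t) atTop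
      (nhds (∫ t in Set.Ioo 0 1, eulerIntegrand t)) := by
    refine integral_tendsto_of_tendsto_of_monotone
      (fun m => integrableOn_eulerIntegrandTrunc m.succ_ne_zero) integrableOn_eulerIntegrand ?_ ?_
    · filter_upwards [ae_restrict_mem measurableSet_Ioo] with t ht
      exact fun a b hab => monotone_eulerIntegrandTrunc ht (Nat.add_le_add_right hab 1)
    · filter_upwards [ae_restrict_mem measurableSet_Ioo] with t ht
      exact (tendsto_eulerIntegrandTrunc ht).comp (tendsto_add_atTop_nat 1)
  rw [integral_eulerIntegrand] at hMCT
  rw [← tendsto_add_atTop_iff_nat 1]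
  simpa only [integral_eulerIntegrandTrunc (Nat.succ_ne_zero _)] using hMCT
end

section
/- For each positive integer m and each positive integer j, the sum over k from 1 to m of binom(m,k) * (-1)^(k+1) / k * ln(1 + k/j) equals 1/j minus the integral from 0 to 1/j of g_m(1/u) du, where g_m(z) = m!/((z+1)(z+2)...(z+m)). -/
/-!
Up to the sign `(-1)^m`, `∑_{k=0}^m (-1)^k C(m,k) / (z+k)` is the `m`-th forward difference of
`z ↦ 1/z`, which is `(-1)^m m! / (z (z+1) ⋯ (z+m))`. At `z = 1/u` this gives, for `u > 0`,
`g_m(1/u) = ∑_{k=0}^m (-1)^k C(m,k) / (1 + k u)`, and integrating term by term over `[0, 1/j]`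
yields `1/j` from `k = 0` and `log (1 + k/j) / k` from each `k ≥ 1`.
-/

open Finset Real
open scoped Nat fwdDiff

section PartialFractions

variable {K : Type*} [Field K]

theorem fwdDiff_iter_inv_s13 {z : K} (hz : ∀ n : ℕ, z + n ≠ 0) (m : ℕ) :
    (Δ_[1])^[m] (fun x : K ↦ x⁻¹) z = (-1) ^ m * m ! / ∏ k ∈ range (m + 1), (z + k) := by
  induction m generalizing z with
  | zero => simp
  | succ m ih =>
    have hz1 : ∀ n : ℕ, z + 1 + n ≠ 0 := fun n ↦ by
      simpa [add_assoc, add_comm (1 : K)] using hz (n + 1)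
    have hzm : z + (m + 1 : ℕ) ≠ 0 := hz (m + 1)
    have hshift : (∏ k ∈ range (m + 1), (z + 1 + k)) * z =
        (∏ k ∈ range (m + 1), (z + k)) * (z + (m + 1 : ℕ)) := by
      rw [← prod_range_succ (fun k : ℕ ↦ z + k), prod_range_succ' _ (m + 1)]
      push_cast
      simp only [add_assoc, add_comm (1 : K), add_zero]
    have hP : ∏ k ∈ range (m + 1), (z + 1 + k) ≠ 0 := prod_ne_zero_iff.2 fun k _ ↦ hz1 k
    have hQ : ∏ k ∈ range (m + 1), (z + k) ≠ 0 := prod_ne_zero_iff.2 fun k _ ↦ hz k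
    rw [Function.iterate_succ_apply', fwdDiff, ih hz1, ih hz, prod_range_succ _ (m + 1)]
    generalize ∏ k ∈ range (m + 1), (z + 1 + k) = P at *
    generalize ∏ k ∈ range (m + 1), (z + k) = Q at *
    rw [div_sub_div _ _ hP hQ, div_eq_div_iff (mul_ne_zero hP hQ) (mul_ne_zero hQ hzm)]
    push_cast [Nat.factorial_succ] at hzm hshift ⊢
    linear_combination -((-1) ^ m * (m ! : K) * Q) * hshift

theorem sum_range_choose_mul_neg_one_pow_div {z : K} (hz : ∀ n : ℕ, z + n ≠ 0) (m : ℕ) :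
    ∑ k ∈ range (m + 1), (m.choose k : K) * (-1) ^ k / (z + k) =
      m ! / ∏ k ∈ range (m + 1), (z + k) := by
  have h := fwdDiff_iter_eq_sum_shift 1 (fun x : K ↦ x⁻¹) m z
  have hterm : ∀ k ∈ range (m + 1), ((-1 : ℤ) ^ (m - k) * m.choose k) • (z + k • 1)⁻¹ =
      (-1) ^ m * ((m.choose k : K) * (-1) ^ k / (z + k)) := fun k hk ↦ by
    have hsq : ((-1 : K) ^ k) * (-1) ^ k = 1 := by rw [← mul_pow]; norm_num
    rw [zsmul_eq_mul, nsmul_one, ← Nat.sub_add_cancel (mem_range_succ_iff.1 hk), pow_add,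
      Nat.sub_add_cancel (mem_range_succ_iff.1 hk)]
    push_cast
    linear_combination -((-1) ^ (m - k) * (m.choose k : K) / (z + k)) * hsq
  rw [fwdDiff_iter_inv_s13 hz, sum_congr rfl hterm, ← mul_sum, mul_div_assoc] at h
  exact (mul_left_cancel₀ (pow_ne_zero m (neg_ne_zero.2 one_ne_zero)) h).symm

end PartialFractions

lemma factorial_div_prod_one_div_add (m : ℕ) {u : ℝ} (hu : 0 < u) :
    (m ! : ℝ) / ∏ i ∈ Icc 1 m, (1 / u + i) =
      ∑ k ∈ range (m + 1), (m.choose k : ℝ) * (-1) ^ k * (1 + k * u)⁻¹ := by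
  have hz : ∀ n : ℕ, 1 / u + n ≠ 0 := fun n ↦ by positivity
  have hprod : ∏ k ∈ range (m + 1), (1 / u + k) = 1 / u * ∏ i ∈ Icc 1 m, (1 / u + i) := by
    rw [prod_range_eq_mul_Ico _ (by omega), Nat.cast_zero, add_zero,
      Ico_add_one_right_eq_Icc]
  have hterm : ∀ k ∈ range (m + 1), (m.choose k : ℝ) * (-1) ^ k * (1 + k * u)⁻¹ =
      u⁻¹ * ((m.choose k : ℝ) * (-1) ^ k / (1 / u + k)) := fun k _ ↦ by
    field_simp
  have hIcc : ∏ i ∈ Icc 1 m, (1 / u + i) ≠ 0 := prod_ne_zero_iff.2 fun i _ ↦ hz i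
  rw [sum_congr rfl hterm, ← mul_sum, sum_range_choose_mul_neg_one_pow_div hz, hprod]
  field_simp

lemma integral_inv_one_add_mul {k c : ℝ} (hk : k ≠ 0) (hc : 0 < 1 + k * c) :
    ∫ u in (0 : ℝ)..c, (1 + k * u)⁻¹ = log (1 + k * c) / k := by
  rw [intervalIntegral.integral_comp_add_mul (fun x ↦ x⁻¹) hk, mul_zero, add_zero,
    integral_inv_of_pos one_pos hc, div_one, smul_eq_mul, inv_mul_eq_div]

lemma integral_sum_choose_mul_neg_one_pow_inv (m : ℕ) {c : ℝ} (hc : 0 ≤ c) :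
    ∫ u in (0 : ℝ)..c, ∑ k ∈ range (m + 1), (m.choose k : ℝ) * (-1) ^ k * (1 + k * u)⁻¹ =
      c - ∑ k ∈ Icc 1 m, (m.choose k : ℝ) * (-1) ^ (k + 1) / k * log (1 + k * c) := by
  have hint (k : ℕ) : IntervalIntegrable (fun u ↦ (1 + k * u)⁻¹) MeasureTheory.volume 0 c :=
    intervalIntegral.intervalIntegrable_inv
      (fun u hu ↦ by have := (Set.uIcc_of_le hc ▸ hu).1; positivity) (by fun_prop)
  rw [intervalIntegral.integral_finsetSum fun k _ ↦ (hint k).const_mul _]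
  simp_rw [intervalIntegral.integral_const_mul]
  rw [sum_range_succ', ← Ico_add_one_right_eq_Icc, sum_Ico_eq_sum_range, Nat.add_sub_cancel,
    sub_eq_add_neg, ← sum_neg_distrib, add_comm c]
  congr 1
  · refine sum_congr rfl fun k _ ↦ ?_
    rw [integral_inv_one_add_mul (by positivity) (by positivity), add_comm 1 k]
    ring
  · simp

theorem stmt13_general (m j : ℕ) :
    ∑ k ∈ Icc 1 m, (m.choose k : ℝ) * (-1) ^ (k + 1) / k * Real.log (1 + (k : ℝ) / j) =
      1 / j - ∫ u in (0 : ℝ)..(1 / j),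
        (m.factorial : ℝ) / ∏ i ∈ Icc 1 m, (1 / u + i) := by
  have hc : (0 : ℝ) ≤ 1 / j := by positivity
  rw [intervalIntegral.integral_congr_Ioo_of_le hc fun u hu ↦
      factorial_div_prod_one_div_add m hu.1, integral_sum_choose_mul_neg_one_pow_inv m hc]
  simp only [mul_one_div, sub_sub_cancel]

theorem stmt13 (m j : ℕ) (hm : 0 < m) (hj : 0 < j) :
    ∑ k ∈ Icc 1 m, (m.choose k : ℝ) * (-1) ^ (k + 1) / k * Real.log (1 + (k : ℝ) / j) =
      1 / j - ∫ u in (0 : ℝ)..(1 / j),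
        (m.factorial : ℝ) / ∏ i ∈ Icc 1 m, (1 / u + i) :=
  stmt13_general m j
end

section
/- For each positive integer m ≥ 2 and all real u with 0 < u ≤ 1, one has 0 < g_m(1/u) ≤ 2·g_1(1/u)/(m+1), where g_m(z) = m!/((z+1)(z+2)...(z+m)). -/
open Finset

noncomputable def g (m : ℕ) (z : ℝ) : ℝ := (m.factorial : ℝ) / ∏ i ∈ Icc 1 m, (z + i)

/-
For z ≥ 1 each step m → m + 1 multiplies g by (m + 1)/(z + m + 1) ≤ (m + 1)/(m + 2).
These factors telescope: ∏_{k=1}^{m-1} (k + 1)/(k + 2) = 2/(m + 1).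
-/

lemma g_pos {z : ℝ} (hz : -1 < z) (m : ℕ) : 0 < g m z :=
  div_pos (by positivity) <| prod_pos fun i hi => by
    have : (1 : ℝ) ≤ i := by exact_mod_cast (mem_Icc.mp hi).1
    linarith

lemma g_succ (n : ℕ) (z : ℝ) : g (n + 1) z = g n z * ((n + 1) / (z + (n + 1))) := by
  unfold g
  rw [prod_Icc_succ_top (by omega), Nat.factorial_succ, div_mul_div_comm]
  push_cast
  ring

lemma g_succ_le {z : ℝ} (hz : 1 ≤ z) (n : ℕ) : g (n + 1) z ≤ g n z * ((n + 1) / (n + 2)) := by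
  rw [g_succ]
  refine mul_le_mul_of_nonneg_left ?_ (g_pos (by linarith) n).le
  exact div_le_div_of_nonneg_left (by positivity) (by positivity) (by linarith)

lemma g_le_two_mul_g_one_div {z : ℝ} (hz : 1 ≤ z) {m : ℕ} (hm : 1 ≤ m) :
    g m z ≤ 2 * g 1 z / (m + 1) := by
  induction m, hm using Nat.le_induction with
  | base => norm_num
  | succ n _ ih =>
    have hn : (0 : ℝ) < n + 1 := by positivity
    calc g (n + 1) z ≤ g n z * ((n + 1) / (n + 2)) := g_succ_le hz n
      _ ≤ 2 * g 1 z / (n + 1) * ((n + 1) / (n + 2)) := by gcongr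
      _ = 2 * g 1 z / ((n + 1 : ℕ) + 1) := by
        push_cast
        field_simp
        ring

theorem stmt14 (m : ℕ) (hm : 2 ≤ m) (u : ℝ) (hu : 0 < u) (hu1 : u ≤ 1) :
    0 < g m (1 / u) ∧ g m (1 / u) ≤ 2 * g 1 (1 / u) / (m + 1) := by
  have hz : 1 ≤ 1 / u := (le_div_iff₀ hu).mpr (by linarith)
  exact ⟨g_pos (by linarith) m, g_le_two_mul_g_one_div hz (by omega)⟩
end

section
/- The following infinite product identity holds: 1 = (2/1)·(2/3)·(8/9)·(128/135)···, where the m-th factor (m ≥ 0) is the product over k from 0 to m of (k+2)^(binom(m,k)·(-1)^k). -/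
/-!
Taking logarithms, the `M`-th partial product is `exp S_M`, and by Pascal's rule the double sum
telescopes: `S_M = -T_M` with `T_M = ∑_{k ≤ M} (-1)^k C(M,k) log (k + 1)`.
Put `φ(t) = ∑_{k ≤ M} (-1)^k C(M,k) log (1 + k t)`, so `T_M = φ 1 - φ 0`. The partial fraction
expansion `∑_k (-1)^k C(M,k) / (x + k) = M! / (x (x+1) ⋯ (x+M))` gives
`φ'(t) = -x M! / ((x+1) ⋯ (x+M))` with `x = 1/t`, and that denominator is at least
`M! (1 + x H_M)`. By the mean value theorem `|T_M| ≤ 1 / H_M`, which tends to `0`.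
-/

open Filter Finset
open scoped Nat Topology

section AltChooseSum

variable {R : Type*} [CommRing R]

/-- `(-1)^n` times the `n`-th forward difference of `f` at `0`. -/
def altChooseSum (f : ℕ → R) (n : ℕ) : R :=
  ∑ k ∈ range (n + 1), (-1) ^ k * n.choose k * f k

lemma altChooseSum_succ (f : ℕ → R) (n : ℕ) :
    altChooseSum f (n + 1) = altChooseSum f n - altChooseSum (fun k => f (k + 1)) n := by
  have h := sum_choose_succ_mul (fun i _ => (-1 : R) ^ i * f i) n
  simp only [altChooseSum]
  convert h using 1
  · exact sum_congr rfl fun k _ => by ring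
  · rw [sub_eq_add_neg, ← sum_neg_distrib]
    congr 1 <;> exact sum_congr rfl fun k _ => by ring

lemma sum_range_altChooseSum_succ (f : ℕ → R) (N : ℕ) :
    ∑ n ∈ range N, altChooseSum (fun k => f (k + 1)) n = f 0 - altChooseSum f N := by
  have h := sum_range_sub (altChooseSum f) N
  simp only [altChooseSum_succ, sub_sub_cancel_left, sum_neg_distrib] at h
  have h0 : altChooseSum f 0 = f 0 := by simp [altChooseSum]
  linear_combination -h + h0

lemma altChooseSum_const (c : R) {n : ℕ} (hn : n ≠ 0) :
    altChooseSum (fun _ => c) n = 0 := by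
  have h := congrArg (Int.cast : ℤ → R) (Int.alternating_sum_range_choose_of_ne hn)
  push_cast at h
  rw [altChooseSum, ← sum_mul, h, zero_mul]

end AltChooseSum

section PartialFractions

variable {K : Type*} [Field K] {x : K}

lemma ascPochhammer_eval_ne_zero (hx : ∀ k : ℕ, x + k ≠ 0) (n : ℕ) :
    (ascPochhammer K n).eval x ≠ 0 := by
  induction n with
  | zero => simp
  | succ n ih => rw [ascPochhammer_succ_eval]; exact mul_ne_zero ih (hx n)

lemma ascPochhammer_succ_eval_eq_mul_eval_add_one (n : ℕ) (x : K) :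
    (ascPochhammer K (n + 1)).eval x = x * (ascPochhammer K n).eval (x + 1) := by
  simp [ascPochhammer_succ_left, Polynomial.eval_comp]

lemma altChooseSum_inv_add (hx : ∀ k : ℕ, x + k ≠ 0) (n : ℕ) :
    altChooseSum (fun k => (x + k)⁻¹) n = n ! / (ascPochhammer K (n + 1)).eval x := by
  induction n generalizing x with
  | zero => simp [altChooseSum]
  | succ n ih =>
    have hx1 : ∀ k : ℕ, x + 1 + k ≠ 0 := fun k => by
      simpa [add_assoc, add_comm (1 : K)] using hx (k + 1)
    have hshift : (fun k : ℕ => (x + (k + 1 : ℕ))⁻¹) = fun k : ℕ => (x + 1 + k)⁻¹ := by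
      ext k; push_cast; ring_nf
    rw [altChooseSum_succ, hshift, ih hx, ih hx1]
    have hA := ascPochhammer_eval_ne_zero hx (n + 1)
    have hB := ascPochhammer_eval_ne_zero hx1 (n + 1)
    refine eq_div_of_mul_eq (ascPochhammer_eval_ne_zero hx (n + 2)) ?_
    calc _ = (ascPochhammer K (n + 2)).eval x / (ascPochhammer K (n + 1)).eval x * (n ! : K)
          - (ascPochhammer K (n + 2)).eval x / (ascPochhammer K (n + 1)).eval (x + 1) * (n ! : K) := by
          ring
      _ = (x + (n + 1 : ℕ)) * (n ! : K) - x * (n ! : K) := by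
          congr 1
          · rw [ascPochhammer_succ_eval (n + 1), mul_div_cancel_left₀ _ hA]
          · rw [ascPochhammer_succ_eval_eq_mul_eval_add_one (n + 1), mul_div_cancel_right₀ _ hB]
      _ = (n + 1)! := by push_cast [Nat.factorial_succ]; ring

lemma altChooseSum_natCast_div_add (hx : ∀ k : ℕ, x + k ≠ 0) {n : ℕ} (hn : n ≠ 0) :
    altChooseSum (fun k => (k : K) / (x + k)) n = -(n ! / (ascPochhammer K n).eval (x + 1)) := by
  have hsplit : altChooseSum (fun k : ℕ => (k : K) / (x + k)) n
      = altChooseSum (fun _ => 1) n - x * altChooseSum (fun k : ℕ => (x + k)⁻¹) n := by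
    simp only [altChooseSum, mul_sum, ← sum_sub_distrib]
    refine sum_congr rfl fun k _ => ?_
    field_simp [hx k]
    ring
  have hx0 : x ≠ 0 := by simpa using hx 0
  rw [hsplit, altChooseSum_const 1 hn, altChooseSum_inv_add hx,
    ascPochhammer_succ_eval_eq_mul_eval_add_one]
  field_simp
  ring

end PartialFractions

lemma tendsto_harmonic_atTop : Tendsto (fun n => (harmonic n : ℝ)) atTop atTop :=
  tendsto_atTop_mono log_add_one_le_harmonic <|
    Real.tendsto_log_atTop.comp <| tendsto_natCast_atTop_atTop.comp <| tendsto_add_atTop_nat 1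

lemma factorial_mul_one_add_mul_harmonic_le (n : ℕ) {x : ℝ} (hx : 0 ≤ x) :
    n ! * (1 + x * harmonic n) ≤ (ascPochhammer ℝ n).eval (x + 1) := by
  induction n with
  | zero => simp
  | succ n ih =>
    have hH : (0 : ℝ) ≤ harmonic n := by push_cast [harmonic]; positivity
    rw [ascPochhammer_succ_eval, harmonic_succ, Nat.factorial_succ]
    push_cast
    calc ((n : ℝ) + 1) * n ! * (1 + x * (harmonic n + ((n : ℝ) + 1)⁻¹))
        = n ! * (1 + x * harmonic n) * (n + 1) + n ! * x := by field_simp; ring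
      _ ≤ n ! * (1 + x * harmonic n) * (n + 1) + n ! * (1 + x * harmonic n) * x := by
        gcongr; nlinarith [mul_nonneg hx hH]
      _ ≤ (ascPochhammer ℝ n).eval (x + 1) * (x + 1 + n) := by nlinarith

lemma mul_factorial_div_ascPochhammer_le {n : ℕ} (hn : n ≠ 0) {x : ℝ} (hx : 0 ≤ x) :
    x * n ! / (ascPochhammer ℝ n).eval (x + 1) ≤ (harmonic n : ℝ)⁻¹ := by
  have hH : (0 : ℝ) < harmonic n := by exact_mod_cast harmonic_pos hn
  have hP := factorial_mul_one_add_mul_harmonic_le n hx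
  rw [div_le_iff₀ (ascPochhammer_pos n _ (by linarith))]
  calc x * n ! ≤ (harmonic n : ℝ)⁻¹ * (n ! * (1 + x * harmonic n)) := by
        field_simp; nlinarith [(n !).cast_nonneg (α := ℝ)]
    _ ≤ _ := by gcongr

lemma hasDerivAt_altChooseSum_log (n : ℕ) {t : ℝ} (ht : 0 ≤ t) :
    HasDerivAt (fun s => altChooseSum (fun k : ℕ => Real.log (1 + k * s)) n)
      (altChooseSum (fun k : ℕ => k / (1 + k * t)) n) t := by
  unfold altChooseSum
  refine HasDerivAt.fun_sum fun k _ => HasDerivAt.const_mul _ ?_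
  have h : HasDerivAt (fun s : ℝ => 1 + k * s) k t := by
    simpa using ((hasDerivAt_id t).const_mul (k : ℝ)).const_add 1
  exact h.log (by positivity)

lemma abs_altChooseSum_log_le {n : ℕ} (hn : n ≠ 0) :
    |altChooseSum (fun k : ℕ => Real.log (k + 1)) n| ≤ (harmonic n : ℝ)⁻¹ := by
  obtain ⟨c, ⟨hc0, -⟩, hc⟩ := exists_hasDerivAt_eq_slope
    (fun s => altChooseSum (fun k : ℕ => Real.log (1 + k * s)) n)
    (fun t => altChooseSum (fun k : ℕ => k / (1 + k * t)) n) zero_lt_one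
    (fun t ht => (hasDerivAt_altChooseSum_log n ht.1).continuousAt.continuousWithinAt)
    (fun t ht => hasDerivAt_altChooseSum_log n ht.1.le)
  have hrescale : altChooseSum (fun k : ℕ => k / (1 + k * c)) n
      = c⁻¹ * altChooseSum (fun k : ℕ => k / (c⁻¹ + k)) n := by
    simp only [altChooseSum, mul_sum]
    refine sum_congr rfl fun k _ => ?_
    field_simp
  have hpoles : ∀ k : ℕ, c⁻¹ + k ≠ 0 := fun k => by positivity
  have h1 : (fun k : ℕ => Real.log (1 + k * 1)) = fun k : ℕ => Real.log (k + 1) := by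
    ext k; rw [mul_one, add_comm]
  have h0 : altChooseSum (fun k : ℕ => Real.log (1 + k * 0)) n = 0 := by simp [altChooseSum]
  rw [h1, h0, sub_zero, sub_zero, div_one, hrescale, altChooseSum_natCast_div_add hpoles hn] at hc
  have hP := ascPochhammer_pos n (c⁻¹ + 1) (by positivity)
  rw [← hc, abs_mul, abs_neg, abs_of_pos (inv_pos.2 hc0), abs_of_pos (by positivity),
    ← mul_div_assoc]
  exact mul_factorial_div_ascPochhammer_le hn (inv_nonneg.2 hc0.le)

lemma prod_zpow_eq_exp_altChooseSum {a : ℕ → ℝ} (ha : ∀ k, 0 < a k) (m : ℕ) :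
    ∏ k ∈ range (m + 1), a k ^ ((-1 : ℤ) ^ k * (m.choose k : ℤ))
      = Real.exp (altChooseSum (fun k => Real.log (a k)) m) := by
  rw [altChooseSum, Real.exp_sum]
  refine prod_congr rfl fun k _ => ?_
  rw [← Real.rpow_intCast, Real.rpow_def_of_pos (ha k)]
  push_cast
  ring_nf

theorem stmt17 :
    Tendsto (fun M : ℕ =>
        ∏ m ∈ range M, ∏ k ∈ range (m + 1),
          ((k : ℝ) + 2) ^ ((-1 : ℤ) ^ k * (m.choose k : ℤ)))
      atTop (nhds 1) := by
  have hT : Tendsto (altChooseSum fun k : ℕ => Real.log (k + 1)) atTop (𝓝 0) :=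
    squeeze_zero_norm' ((eventually_ne_atTop 0).mono fun n hn => abs_altChooseSum_log_le hn)
      tendsto_harmonic_atTop.inv_tendsto_atTop
  have hprod : ∀ M, ∏ m ∈ range M, ∏ k ∈ range (m + 1),
      ((k : ℝ) + 2) ^ ((-1 : ℤ) ^ k * (m.choose k : ℤ))
        = Real.exp (-altChooseSum (fun k : ℕ => Real.log (k + 1)) M) := by
    intro M
    have h := sum_range_altChooseSum_succ (fun k : ℕ => Real.log (k + 1)) M
    simp only [Nat.cast_zero, zero_add, Real.log_one, zero_sub, Nat.cast_add, Nat.cast_one,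
      add_assoc, one_add_one_eq_two] at h
    simp only [prod_zpow_eq_exp_altChooseSum (fun k => (by positivity : (0 : ℝ) < k + 2)),
      ← Real.exp_sum, h]
  have hexp := (Real.continuous_exp.tendsto _).comp hT.neg
  rw [neg_zero, Real.exp_zero] at hexp
  exact hexp.congr fun M => (hprod M).symm
end

section
/- For each real u > 0, the difference between the m-th partial alternating binomial sum Σ_{k=1}^{m} binom(m,k)(-1)^(k+1)/(ku+1) and 1 equals −g_m(1/u), where g_m(z) = m!/((z+1)...(z+m)); in particular 1 − Σ_{k=1}^{m} binom(m,k)(-1)^(k+1)/(ku+1) = m!/((1/u+1)(1/u+2)...(1/u+m)). -/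
/-!
With `x = 1/u` we have `1/(ku+1) = x/(x+k)`, so the left side is `x ∑_{k=0}^m (-1)^k C(m,k)/(x+k)`,
and `∑_{k=0}^m (-1)^k C(m,k)/(x+k) = m!/(x(x+1)⋯(x+m))`. This identity follows by induction on `m`:
Pascal's rule writes the sum for `m + 1` at `x` as the difference of the sums for `m` at `x` and at
`x + 1`.
-/

open Finset

theorem sum_range_neg_one_pow_mul_choose_succ {R : Type*} [CommRing R] (f : ℕ → R) (m : ℕ) :
    ∑ k ∈ range (m + 2), (-1) ^ k * ((m + 1).choose k : R) * f k =
      ∑ k ∈ range (m + 1), (-1) ^ k * (m.choose k : R) * (f k - f (k + 1)) := by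
  calc _ = ∑ k ∈ range (m + 2), ((m + 1).choose k : R) * ((-1) ^ k * f k) :=
        sum_congr rfl fun _ _ ↦ by ring
    _ = _ := sum_choose_succ_mul (fun i _ ↦ (-1) ^ i * f i) m
    _ = _ := by rw [← sum_add_distrib]; exact sum_congr rfl fun _ _ ↦ by ring

theorem prod_range_succ_add_natCast {R : Type*} [CommRing R] (x : R) (n : ℕ) :
    ∏ i ∈ range (n + 1), (x + i) = x * ∏ i ∈ range n, (x + 1 + i) := by
  rw [prod_range_succ', mul_comm]
  push_cast
  simp only [add_zero, add_assoc, add_comm (1 : R)]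

theorem sum_range_neg_one_pow_mul_choose_div_add {K : Type*} [Field K] (m : ℕ) (x : K)
    (hx : ∏ i ∈ range (m + 1), (x + i) ≠ 0) :
    ∑ k ∈ range (m + 1), (-1) ^ k * (m.choose k : K) / (x + k) =
      m.factorial / ∏ i ∈ range (m + 1), (x + i) := by
  induction m generalizing x with
  | zero => simp
  | succ m ih =>
    have hQ : ∏ i ∈ range (m + 2), (x + i) = (∏ i ∈ range (m + 1), (x + i)) * (x + (m + 1)) := by
      rw [prod_range_succ]; push_cast; rfl
    have hQ' := prod_range_succ_add_natCast x (m + 1)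
    have hP : ∏ i ∈ range (m + 1), (x + i) ≠ 0 := left_ne_zero_of_mul (hQ ▸ hx)
    have hP' : ∏ i ∈ range (m + 1), (x + 1 + i) ≠ 0 := right_ne_zero_of_mul (hQ' ▸ hx)
    have hlast : x + (m + 1) ≠ 0 := right_ne_zero_of_mul (hQ ▸ hx)
    have hshift (k : ℕ) : x + ((k + 1 : ℕ) : K) = x + 1 + k := by push_cast; ring
    have h0 := ih x hP
    have h1 := ih (x + 1) hP'
    simp only [div_eq_mul_inv] at h0 h1 ⊢
    rw [sum_range_neg_one_pow_mul_choose_succ (fun k ↦ (x + k)⁻¹)]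
    simp only [hshift, mul_sub, sum_sub_distrib, h0, h1]
    rw [Nat.factorial_succ, hQ]
    push_cast
    field_simp
    linear_combination (-(m.factorial : K)) * hQ.symm.trans hQ'

theorem stmt19_general (u : ℝ) (hu : 0 < u) (m : ℕ) :
    1 - ∑ k ∈ Icc 1 m, (m.choose k : ℝ) * (-1) ^ (k + 1) / (k * u + 1) =
      (m.factorial : ℝ) / ∏ i ∈ Icc 1 m, (1 / u + i) := by
  have hm : 0 < m + 1 := m.succ_pos
  have hP : ∏ i ∈ range (m + 1), (1 / u + i) ≠ 0 := (prod_pos fun i _ ↦ by positivity).ne'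
  calc 1 - ∑ k ∈ Icc 1 m, (m.choose k : ℝ) * (-1) ^ (k + 1) / (k * u + 1)
      = ∑ k ∈ range (m + 1), (-1) ^ k * (m.choose k : ℝ) / (k * u + 1) := by
        rw [sum_range_eq_add_Ico _ hm, Ico_add_one_right_eq_Icc, sub_eq_add_neg,
          ← sum_neg_distrib]
        congr 1
        · simp
        · exact sum_congr rfl fun k _ ↦ by ring
    _ = 1 / u * ∑ k ∈ range (m + 1), (-1) ^ k * (m.choose k : ℝ) / (1 / u + k) := by
        rw [mul_sum]
        refine sum_congr rfl fun k _ ↦ ?_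
        field_simp
        ring
    _ = _ := by
        rw [sum_range_neg_one_pow_mul_choose_div_add m _ hP, prod_range_eq_mul_Ico _ hm,
          Ico_add_one_right_eq_Icc, Nat.cast_zero, add_zero]
        field_simp

theorem stmt19 (u : ℝ) (hu : 0 < u) (m : ℕ) (hm : 0 < m) :
    1 - ∑ k ∈ Icc 1 m, (m.choose k : ℝ) * (-1) ^ (k + 1) / (k * u + 1) =
      (m.factorial : ℝ) / ∏ i ∈ Icc 1 m, (1 / u + i) :=
  stmt19_general u hu m
end
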